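/- Let n ≥ 2, let I1, I2 be disjoint nonempty subsets of {1,…,n} with |I1| + |I2| < n, let k be an integer with 1 ≤ k ≤ n − |I1| − |I2|, let p = ⌊(n − |I1| − |I2|)/k⌋, and let J^0, …, J^{p−1} be pairwise disjoint subsets of {1,…,n} \ (I1 ∪ I2), each of size exactly k. Define the graph sequence G^t = S_{n, J^{t mod p}} for t ≥ 0. Then the effective distance satisfies dist_{{G^t}}(I1, I2) = p + 1. -/

import Mathlib

set_option autoImplicit false
set_option maxHeartbeats 1000000

open Matrix MeasureTheory

noncomputable section

/-- The all-ones vector in `ℝ^n`. -/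
def onesVec (n : ℕ) : Fin n → ℝ := fun _ => 1

/-- The all-ones `n × n` matrix `𝟙𝟙ᵀ`. -/
def onesMat (n : ℕ) : Matrix (Fin n) (Fin n) ℝ := Matrix.of fun _ _ => (1 : ℝ)

/-- The averaging matrix `(1/n)𝟙𝟙ᵀ`. -/
def avgMat (n : ℕ) : Matrix (Fin n) (Fin n) ℝ := (n : ℝ)⁻¹ • onesMat n

/-- Spectral norm (largest singular value) of a real matrix. -/
def specNorm {m n : ℕ} (M : Matrix (Fin m) (Fin n) ℝ) : ℝ :=
  ‖(Matrix.toEuclideanLin (𝕜 := ℝ) M).toContinuousLinearMap‖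

/-- Frobenius norm of a real matrix. -/
def frobNorm {m n : ℕ} (M : Matrix (Fin m) (Fin n) ℝ) : ℝ :=
  Real.sqrt (∑ i, ∑ j, (M i j) ^ 2)

/-- The weight-matrix class `W_{n,β}`. -/
def memW (n : ℕ) (β : ℝ) (W : Matrix (Fin n) (Fin n) ℝ) : Prop :=
  W *ᵥ onesVec n = onesVec n ∧ onesVec n ᵥ* W = onesVec n ∧
    specNorm (W - avgMat n) ≤ β

/-- The sun-shaped graph `S_{n,C}`. -/
def sunGraph (n : ℕ) (C : Finset (Fin n)) : SimpleGraph (Fin n) where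
  Adj i j := i ≠ j ∧ (i ∈ C ∨ j ∈ C)
  symm := by
    constructor; intro i j h
    exact ⟨fun hej => h.1 hej.symm, h.2.symm⟩
  loopless := by constructor; intro i h; exact h.1 rfl

instance (n : ℕ) (C : Finset (Fin n)) : DecidableRel (sunGraph n C).Adj :=
  fun i j => inferInstanceAs (Decidable (i ≠ j ∧ (i ∈ C ∨ j ∈ C)))

/-- One-step neighborhood `N_G(I)` (including `I` itself). -/
def nbhd {n : ℕ} (G : SimpleGraph (Fin n)) (I : Set (Fin n)) : Set (Fin n) :=
  I ∪ {j | ∃ i ∈ I, G.Adj i j}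

/-- Iterated neighborhood `N_{G^t}(N_{G^{t+1}}(⋯ N_{G^{t+R-1}}(I) ⋯))`. -/
def iterNbhd {n : ℕ} (G : ℕ → SimpleGraph (Fin n)) (t : ℕ) :
    ℕ → Set (Fin n) → Set (Fin n)
  | 0, I => I
  | R + 1, I => nbhd (G t) (iterNbhd G (t + 1) R I)

/-- Directed effective distance: smallest `R ≥ 1` such that a message sent from `i`
at some round `t` reaches `j` after `R` rounds. -/
def effDistOne {n : ℕ} (G : ℕ → SimpleGraph (Fin n)) (i j : Fin n) : ℕ :=
  sInf {R | 1 ≤ R ∧ ∃ t, j ∈ iterNbhd G t R {i}}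

/-- Effective distance between two nodes. -/
def effDistPair {n : ℕ} (G : ℕ → SimpleGraph (Fin n)) (i j : Fin n) : ℕ :=
  max (effDistOne G i j) (effDistOne G j i)

/-- Effective distance between two disjoint sets of nodes. -/
def effDistSets {n : ℕ} (G : ℕ → SimpleGraph (Fin n)) (I1 I2 : Set (Fin n)) : ℕ :=
  sInf {m | ∃ i ∈ I1, ∃ j ∈ I2, m = effDistPair G i j}

section SunGraph

variable {n : ℕ}

lemma nbhd_sunGraph_of_disjoint {C : Finset (Fin n)} {S : Set (Fin n)} (hS : S.Nonempty)
    (hSC : Disjoint S C) : nbhd (sunGraph n C) S = S ∪ C := by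
  obtain ⟨s, hs⟩ := hS
  ext j
  simp only [nbhd, sunGraph, Set.mem_union, Set.mem_ofPred_eq, Finset.mem_coe]
  constructor
  · rintro (hj | ⟨i, hi, -, hiC | hjC⟩)
    · exact .inl hj
    · exact absurd hiC (Set.disjoint_left.1 hSC hi)
    · exact .inr hjC
  · rintro (hj | hjC)
    · exact .inl hj
    · by_cases hsj : s = j
      · exact .inl (hsj ▸ hs)
      · exact .inr ⟨s, hs, hsj, .inr hjC⟩

lemma nbhd_sunGraph_eq_univ {C : Finset (Fin n)} {S : Set (Fin n)} {c : Fin n}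
    (hcS : c ∈ S) (hcC : c ∈ C) : nbhd (sunGraph n C) S = Set.univ := by
  refine Set.eq_univ_of_forall fun j => ?_
  by_cases hcj : c = j
  · exact .inl (hcj ▸ hcS)
  · exact .inr ⟨c, hcS, hcj, .inl hcC⟩

lemma iterNbhd_sunGraph_singleton (C : ℕ → Finset (Fin n)) (i : Fin n) (R t : ℕ)
    (hC : (Set.Ico t (t + R)).PairwiseDisjoint fun u => (C u : Set (Fin n)))
    (hi : ∀ u ∈ Set.Ico t (t + R), i ∉ C u) :
    iterNbhd (fun u => sunGraph n (C u)) t R {i} =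
      insert i (⋃ u ∈ Set.Ico t (t + R), (C u : Set (Fin n))) := by
  induction R generalizing t with
  | zero => simp [iterNbhd]
  | succ R ih =>
    have hwin : Set.Ico (t + 1) (t + 1 + R) ⊆ Set.Ico t (t + (R + 1)) :=
      Set.Ico_subset_Ico (by omega) (by omega)
    have hprev := ih (t + 1) (hC.subset hwin) fun u hu => hi u (hwin hu)
    have ht : t ∈ Set.Ico t (t + (R + 1)) := ⟨le_rfl, by omega⟩
    have hdisj : Disjoint (insert i (⋃ u ∈ Set.Ico (t + 1) (t + 1 + R), (C u : Set (Fin n))))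
        (C t) := by
      refine Set.disjoint_insert_left.2 ⟨hi t ht, Set.disjoint_iUnion₂_left.2 fun u hu => ?_⟩
      exact hC (hwin hu) ht (by have := hu.1; omega)
    change nbhd (sunGraph n (C t)) _ = _
    rw [hprev, nbhd_sunGraph_of_disjoint (Set.insert_nonempty _ _) hdisj]
    ext x
    simp only [Set.mem_union, Set.mem_insert_iff, Set.mem_iUnion, Set.mem_Ico, Finset.mem_coe,
      exists_prop]
    constructor
    · rintro ((rfl | ⟨u, hu, hx⟩) | hx)
      · exact .inl rfl
      · exact .inr ⟨u, ⟨by omega, by omega⟩, hx⟩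
      · exact .inr ⟨t, ⟨le_rfl, by omega⟩, hx⟩
    · rintro (rfl | ⟨u, hu, hx⟩)
      · exact .inl (.inl rfl)
      · rcases hu.1.eq_or_lt with rfl | htu
        · exact .inr hx
        · exact .inl (.inr ⟨u, ⟨htu, by omega⟩, hx⟩)

end SunGraph

section EffectiveDistance

variable {n : ℕ} (G : ℕ → SimpleGraph (Fin n))

lemma effDistOne_eq_of_isLeast {i j : Fin n} {d : ℕ} (hd : 1 ≤ d)
    (hreach : ∃ t, j ∈ iterNbhd G t d {i})
    (hmin : ∀ R, 1 ≤ R → R < d → ∀ t, j ∉ iterNbhd G t R {i}) :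
    effDistOne G i j = d :=
  IsLeast.csInf_eq ⟨⟨hd, hreach⟩, fun _ ⟨hR, t, ht⟩ => not_lt.1 fun hRd => hmin _ hR hRd t ht⟩

lemma effDistSets_eq_of_forall {I1 I2 : Set (Fin n)} {d : ℕ} (hI1 : I1.Nonempty)
    (hI2 : I2.Nonempty) (h : ∀ i ∈ I1, ∀ j ∈ I2, effDistPair G i j = d) :
    effDistSets G I1 I2 = d := by
  obtain ⟨i, hi⟩ := hI1
  obtain ⟨j, hj⟩ := hI2
  have hset : {m | ∃ i ∈ I1, ∃ j ∈ I2, m = effDistPair G i j} = {d} := by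
    ext m
    constructor
    · rintro ⟨i, hi, j, hj, rfl⟩
      exact h i hi j hj
    · rintro rfl
      exact ⟨i, hi, j, hj, (h i hi j hj).symm⟩
  rw [effDistSets, hset, csInf_singleton]

end EffectiveDistance

section Rotating

variable {n p : ℕ} {J : ℕ → Finset (Fin n)}

lemma pairwiseDisjoint_rotating (hJ : ∀ q < p, ∀ q' < p, q ≠ q' → Disjoint (J q) (J q'))
    (hp : 0 < p) (t : ℕ) :
    (Set.Ico t (t + p)).PairwiseDisjoint fun u => (J (u % p) : Set (Fin n)) := by
  intro u hu v hv huv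
  have hmod : u % p ≠ v % p := fun h =>
    huv (Nat.mod_injOn_Ico t p (by simpa using hu) (by simpa using hv) h)
  exact Finset.disjoint_coe.2 (hJ _ (Nat.mod_lt _ hp) _ (Nat.mod_lt _ hp) hmod)

/-- In `R ≤ p` rounds from time `t` the message from `i` collects only the centers of those rounds,
so it misses `j`. Over `p + 1` rounds the first `p` of them (the innermost) already include the
center `J (t % p)` of the last one, which then broadcasts to everyone. -/
lemma effDistOne_rotating (hJ : ∀ q < p, ∀ q' < p, q ≠ q' → Disjoint (J q) (J q'))
    (hJne : ∀ q < p, (J q).Nonempty) (hp : 0 < p) {i j : Fin n} (hij : i ≠ j)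
    (hi : ∀ q < p, i ∉ J q) (hj : ∀ q < p, j ∉ J q) :
    effDistOne (fun t => sunGraph n (J (t % p))) i j = p + 1 := by
  have hreached (R t : ℕ) (hR : R ≤ p) :=
    iterNbhd_sunGraph_singleton (fun u => J (u % p)) i R t
      ((pairwiseDisjoint_rotating hJ hp t).subset (Set.Ico_subset_Ico_right (by omega)))
      fun u _ => hi _ (Nat.mod_lt _ hp)
  refine effDistOne_eq_of_isLeast _ (by omega) ⟨0, ?_⟩ fun R _ hR t hjR => ?_
  · obtain ⟨c, hc⟩ := hJne 0 hp
    change j ∈ nbhd (sunGraph n (J (0 % p))) (iterNbhd _ 1 p {i})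
    rw [hreached p 1 le_rfl, nbhd_sunGraph_eq_univ (c := c)]
    · trivial
    · refine Set.mem_insert_of_mem _ (Set.mem_biUnion (x := p) ⟨by omega, by omega⟩ ?_)
      simpa using hc
    · simpa using hc
  · rw [hreached R t (by omega)] at hjR
    simp only [Set.mem_insert_iff, Set.mem_iUnion, Finset.mem_coe] at hjR
    obtain hji | ⟨u, -, hju⟩ := hjR
    · exact hij hji.symm
    · exact hj _ (Nat.mod_lt _ hp) hju

end Rotating

theorem effDist_rotating_sunGraph_general (n : ℕ)
    (I1 I2 : Finset (Fin n)) (hI1 : I1.Nonempty) (hI2 : I2.Nonempty)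
    (hdisj : Disjoint I1 I2)
    (k : ℕ) (hk1 : 1 ≤ k) (hk2 : k ≤ n - I1.card - I2.card)
    (p : ℕ) (hp : p = (n - I1.card - I2.card) / k)
    (J : ℕ → Finset (Fin n))
    (hJcard : ∀ q < p, (J q).card = k)
    (hJsub : ∀ q < p, J q ⊆ (I1 ∪ I2)ᶜ)
    (hJdisj : ∀ q < p, ∀ q' < p, q ≠ q' → Disjoint (J q) (J q')) :
    effDistSets (fun t => sunGraph n (J (t % p))) ↑I1 ↑I2 = p + 1 := by
  have hp0 : 0 < p := hp ▸ Nat.div_pos hk2 hk1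
  have hJne : ∀ q < p, (J q).Nonempty := fun q hq =>
    Finset.card_pos.1 (by rw [hJcard q hq]; exact hk1)
  have hout : ∀ x ∈ I1 ∪ I2, ∀ q < p, x ∉ J q := fun x hx q hq hxq =>
    Finset.mem_compl.1 (hJsub q hq hxq) hx
  refine effDistSets_eq_of_forall _ hI1 hI2 fun i hi j hj => ?_
  have hij : i ≠ j := fun h => Finset.disjoint_left.1 hdisj hi (h ▸ hj)
  have hi' := hout i (Finset.mem_union_left _ hi)
  have hj' := hout j (Finset.mem_union_right _ hj)
  rw [effDistPair, effDistOne_rotating hJdisj hJne hp0 hij hi' hj',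
    effDistOne_rotating hJdisj hJne hp0 hij.symm hj' hi', max_self]

/-- for disjoint nonempty `I1, I2 ⊆ [n]` with `|I1| + |I2| < n`,
`1 ≤ k ≤ n - |I1| - |I2|`, `p = ⌊(n - |I1| - |I2|)/k⌋`, and pairwise disjoint center
sets `J 0, …, J (p-1) ⊆ [n] \ (I1 ∪ I2)` each of cardinality `k`, the effective
distance of the rotating sun-shaped graph sequence `G t = S_{n, J (t % p)}`
between `I1` and `I2` equals `p + 1`. -/
theorem effDist_rotating_sunGraph (n : ℕ) (hn : 2 ≤ n)
    (I1 I2 : Finset (Fin n)) (hI1 : I1.Nonempty) (hI2 : I2.Nonempty)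
    (hdisj : Disjoint I1 I2) (hcard : I1.card + I2.card < n)
    (k : ℕ) (hk1 : 1 ≤ k) (hk2 : k ≤ n - I1.card - I2.card)
    (p : ℕ) (hp : p = (n - I1.card - I2.card) / k)
    (J : ℕ → Finset (Fin n))
    (hJcard : ∀ q < p, (J q).card = k)
    (hJsub : ∀ q < p, J q ⊆ (I1 ∪ I2)ᶜ)
    (hJdisj : ∀ q < p, ∀ q' < p, q ≠ q' → Disjoint (J q) (J q')) :
    effDistSets (fun t => sunGraph n (J (t % p))) ↑I1 ↑I2 = p + 1 :=
  effDist_rotating_sunGraph_general n I1 I2 hI1 hI2 hdisj k hk1 hk2 p hp J hJcard hJsub hJdisj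

end
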